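/- Kernel decomposition at high temperature: for the acceptance probabilities p_J(l,k|sigma,sigma') with general symmetric interaction J and p_0(l,k|sigma,sigma') = 1/2 (the J=0 case), one has p_J(l,k|sigma,sigma') >= delta_J * p_0(l,k|sigma,sigma') pointwise with delta_J = e^{-4 Jbar}, where Jbar = max_i sum_j |J_{ij}|. Consequently, there exists a sub-probability kernel R such that Q_J = delta_J' Q_0 + R with delta_J' = (1/2) e^{-4 Jbar}, where Q_J and Q_0 are the corresponding collision kernels. -/

import Mathlib

open Finset

/-- Spin value of a Boolean: `true ↦ 1`, `false ↦ -1`. -/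
noncomputable def spin (b : Bool) : ℝ := if b then 1 else -1

/-- Energy of the zero-field Ising model with interaction `J`. -/
noncomputable def isingEnergy0 {n : ℕ} (J : Matrix (Fin n) (Fin n) ℝ)
    (σ : Fin n → Bool) : ℝ :=
  (1 / 2) * ∑ i, ∑ j, J i j * spin (σ i) * spin (σ j)

/-- The (zero-field) Ising measure `μ_J(σ) = exp(E σ)/Z`. -/
noncomputable def isingMeasure0 {n : ℕ} (J : Matrix (Fin n) (Fin n) ℝ)
    (σ : Fin n → Bool) : ℝ :=
  Real.exp (isingEnergy0 J σ) / ∑ τ : Fin n → Bool, Real.exp (isingEnergy0 J τ)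

/-- The acceptance probability `p_J(ℓ,k|σ,σ')`. -/
noncomputable def pJ {n : ℕ} (J : Matrix (Fin n) (Fin n) ℝ)
    (ℓ k : Fin n) (σ σ' : Fin n → Bool) : ℝ :=
  isingMeasure0 J (Function.update σ ℓ (σ' k)) *
      isingMeasure0 J (Function.update σ' k (σ ℓ)) /
    (isingMeasure0 J σ * isingMeasure0 J σ' +
      isingMeasure0 J (Function.update σ ℓ (σ' k)) *
        isingMeasure0 J (Function.update σ' k (σ ℓ)))

/-- The single-pair exchange kernel `Q^{ℓ,k}` built from acceptance probabilities. -/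
noncomputable def Qpair {n : ℕ}
    (pacc : Fin n → Fin n → (Fin n → Bool) → (Fin n → Bool) → ℝ)
    (ℓ k : Fin n) (σ σ' τ τ' : Fin n → Bool) : ℝ :=
  pacc ℓ k σ σ' *
      (if τ = Function.update σ ℓ (σ' k) ∧ τ' = Function.update σ' k (σ ℓ) then 1 else 0) +
    (1 - pacc ℓ k σ σ') * (if τ = σ ∧ τ' = σ' then 1 else 0)

/-- The collision kernel `Q = (1/n) ∑_{ℓ,k} K(ℓ,k) Q^{ℓ,k}`. -/
noncomputable def Qker {n : ℕ} (K : Fin n → Fin n → ℝ)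
    (pacc : Fin n → Fin n → (Fin n → Bool) → (Fin n → Bool) → ℝ)
    (σ σ' τ τ' : Fin n → Bool) : ℝ :=
  (1 / n) * ∑ ℓ, ∑ k, K ℓ k * Qpair pacc ℓ k σ σ' τ τ'

lemma abs_spin (b : Bool) : |spin b| = 1 := by cases b <;> simp [spin]

lemma energy_update_diff {n : ℕ} (J : Matrix (Fin n) (Fin n) ℝ) (hJ : J.IsSymm)
    (Jbar : ℝ) (hJbar : ∀ i, ∑ j, |J i j| ≤ Jbar)
    (σ : Fin n → Bool) (ℓ : Fin n) (a : Bool) :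
    |isingEnergy0 J σ - isingEnergy0 J (Function.update σ ℓ a)| ≤ 2 * Jbar := by
  set s : Fin n → ℝ := fun i => spin (σ i) with hs
  set t : Fin n → ℝ := fun i => spin (Function.update σ ℓ a i) with ht
  have hteq : ∀ i, i ≠ ℓ → t i = s i := by
    intro i hi; simp [ht, hs, Function.update_of_ne hi]
  have hdiff : isingEnergy0 J σ - isingEnergy0 J (Function.update σ ℓ a)
      = (1/2) * ∑ i, ∑ j, J i j * (s i * s j - t i * t j) := by
    simp only [isingEnergy0, ← mul_sub, ← Finset.mul_sum]
    rw [← Finset.sum_sub_distrib]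
    congr 1
    refine Finset.sum_congr rfl fun i _ => ?_
    rw [← Finset.sum_sub_distrib]
    refine Finset.sum_congr rfl fun j _ => ?_
    ring
  rw [hdiff]
  have key : ∀ i, |∑ j, J i j * (s i * s j - t i * t j)| ≤
      (if i = ℓ then 2 * ∑ j, |J ℓ j| else 2 * |J i ℓ|) := by
    intro i
    by_cases hi : i = ℓ
    · simp only [hi, if_pos rfl]
      calc |∑ j, J ℓ j * (s ℓ * s j - t ℓ * t j)| ≤ ∑ j, |J ℓ j * (s ℓ * s j - t ℓ * t j)| :=
            Finset.abs_sum_le_sum_abs _ _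
        _ ≤ ∑ j, |J ℓ j| * 2 := by
            refine Finset.sum_le_sum fun j _ => ?_
            rw [abs_mul]
            refine mul_le_mul_of_nonneg_left ?_ (abs_nonneg _)
            calc |s ℓ * s j - t ℓ * t j| ≤ |s ℓ * s j| + |t ℓ * t j| := abs_sub _ _
              _ ≤ 2 := by
                  simp only [abs_mul, hs, ht, abs_spin]
                  norm_num
        _ = 2 * ∑ j, |J ℓ j| := by rw [← Finset.sum_mul]; ring
    · have hinner : ∑ j, J i j * (s i * s j - t i * t j)
          = J i ℓ * (s i * s ℓ - t i * t ℓ) := by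
        refine Finset.sum_eq_single_of_mem ℓ (Finset.mem_univ _) fun j _ hj => ?_
        rw [hteq i hi, hteq j hj]; ring
      rw [hinner, if_neg hi]
      rw [abs_mul]
      calc |J i ℓ| * |s i * s ℓ - t i * t ℓ| ≤ |J i ℓ| * 2 := by
            refine mul_le_mul_of_nonneg_left ?_ (abs_nonneg _)
            calc |s i * s ℓ - t i * t ℓ| ≤ |s i * s ℓ| + |t i * t ℓ| := abs_sub _ _
              _ ≤ 2 := by simp only [abs_mul, hs, ht, abs_spin]; norm_num
        _ = 2 * |J i ℓ| := by ring
  have hsum : |∑ i, ∑ j, J i j * (s i * s j - t i * t j)| ≤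
      ∑ i, (if i = ℓ then 2 * ∑ j, |J ℓ j| else 2 * |J i ℓ|) :=
    le_trans (Finset.abs_sum_le_sum_abs _ _) (Finset.sum_le_sum fun i _ => key i)
  have hsum2 : ∑ i, (if i = ℓ then 2 * ∑ j, |J ℓ j| else 2 * |J i ℓ|) ≤ 4 * Jbar := by
    have hsplit : ∑ i, (if i = ℓ then 2 * ∑ j, |J ℓ j| else 2 * |J i ℓ|)
        = 2 * ∑ j, |J ℓ j| + ∑ i ∈ Finset.univ.erase ℓ, 2 * |J i ℓ| := by
      rw [← Finset.add_sum_erase _ _ (Finset.mem_univ ℓ)]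
      simp only [if_pos rfl]
      congr 1
      refine Finset.sum_congr rfl fun i hi => ?_
      rw [if_neg (Finset.ne_of_mem_erase hi)]
    rw [hsplit]
    have h1 : ∑ j, |J ℓ j| ≤ Jbar := hJbar ℓ
    have h2 : ∑ i ∈ Finset.univ.erase ℓ, 2 * |J i ℓ| ≤ 2 * Jbar := by
      have : ∑ i ∈ Finset.univ.erase ℓ, 2 * |J i ℓ| ≤ ∑ i, 2 * |J i ℓ| := by
        refine Finset.sum_le_sum_of_subset_of_nonneg (Finset.erase_subset _ _)
          fun i _ _ => by positivity
      refine this.trans ?_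
      have heq : ∀ i, |J i ℓ| = |J ℓ i| := fun i => by rw [hJ.apply]
      calc ∑ i, 2 * |J i ℓ| = 2 * ∑ i, |J ℓ i| := by
            rw [Finset.mul_sum]; exact Finset.sum_congr rfl fun i _ => by rw [heq]
        _ ≤ 2 * Jbar := by
            have := hJbar ℓ; linarith
    linarith
  calc |(1/2 : ℝ) * ∑ i, ∑ j, J i j * (s i * s j - t i * t j)|
      = (1/2) * |∑ i, ∑ j, J i j * (s i * s j - t i * t j)| := by
        rw [abs_mul]; norm_num
    _ ≤ (1/2) * (4 * Jbar) := by
        refine mul_le_mul_of_nonneg_left (hsum.trans hsum2) (by norm_num)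
    _ = 2 * Jbar := by ring

lemma pJ_bounds {n : ℕ} (hn : 0 < n) (J : Matrix (Fin n) (Fin n) ℝ) (hJ : J.IsSymm)
    (Jbar : ℝ) (hJbar : ∀ i, ∑ j, |J i j| ≤ Jbar)
    (ℓ k : Fin n) (σ σ' : Fin n → Bool) :
    Real.exp (-4 * Jbar) * (1 / 2) ≤ pJ J ℓ k σ σ' ∧
      pJ J ℓ k σ σ' ≤ 1 - Real.exp (-4 * Jbar) * (1 / 4) := by
  have hJbar0 : 0 ≤ Jbar := by
    have := hJbar ⟨0, hn⟩
    have h0 : (0:ℝ) ≤ ∑ j, |J ⟨0, hn⟩ j| := Finset.sum_nonneg fun j _ => abs_nonneg _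
    linarith
  set Z : ℝ := ∑ τ : Fin n → Bool, Real.exp (isingEnergy0 J τ) with hZ
  have hZpos : 0 < Z :=
    Finset.sum_pos (fun _ _ => Real.exp_pos _) Finset.univ_nonempty
  set Ea := isingEnergy0 J (Function.update σ ℓ (σ' k)) with hEa
  set Eb := isingEnergy0 J (Function.update σ' k (σ ℓ)) with hEb
  set Ec := isingEnergy0 J σ with hEc
  set Ed := isingEnergy0 J σ' with hEd
  set A := Real.exp Ea; set B := Real.exp Eb; set C := Real.exp Ec; set D := Real.exp Ed
  have hA : 0 < A := Real.exp_pos _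
  have hB : 0 < B := Real.exp_pos _
  have hC : 0 < C := Real.exp_pos _
  have hD : 0 < D := Real.exp_pos _
  have hpJ : pJ J ℓ k σ σ' = A * B / (C * D + A * B) := by
    simp only [pJ, isingMeasure0, ← hEa, ← hEb, ← hEc, ← hEd, ← hZ]
    rw [div_mul_div_comm, div_mul_div_comm, ← add_div]
    have hZne : Z * Z ≠ 0 := by positivity
    have hdne : C * D + A * B ≠ 0 := by positivity
    field_simp
    simp only [A, B, C, D]; ring
  have hdenpos : 0 < C * D + A * B := by positivity
  have h1 : |Ec - Ea| ≤ 2 * Jbar := energy_update_diff J hJ Jbar hJbar σ ℓ _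
  have h2 : |Ed - Eb| ≤ 2 * Jbar := energy_update_diff J hJ Jbar hJbar σ' k _
  set x := Real.exp (-4 * Jbar) with hx
  have hx0 : 0 < x := Real.exp_pos _
  have hx1 : x ≤ 1 := Real.exp_le_one_iff.mpr (by linarith)
  have hCD_le : C * D ≤ Real.exp (4 * Jbar) * (A * B) := by
    rw [← Real.exp_add, ← Real.exp_add, ← Real.exp_add]
    refine Real.exp_le_exp.mpr ?_
    have := abs_le.mp h1; have := abs_le.mp h2
    linarith [(abs_le.mp h1).2, (abs_le.mp h2).2]
  have hCD_ge : x * (A * B) ≤ C * D := by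
    rw [hx, ← Real.exp_add, ← Real.exp_add, ← Real.exp_add]
    refine Real.exp_le_exp.mpr ?_
    linarith [(abs_le.mp h1).1, (abs_le.mp h2).1]
  have hxy : x * Real.exp (4 * Jbar) = 1 := by
    rw [hx, ← Real.exp_add]; norm_num
  constructor
  · rw [hpJ, le_div_iff₀ hdenpos]
    have hkey : x * (C * D) ≤ A * B := by
      calc x * (C * D) ≤ x * (Real.exp (4 * Jbar) * (A * B)) :=
            mul_le_mul_of_nonneg_left hCD_le hx0.le
        _ = A * B := by rw [← mul_assoc, hxy, one_mul]
    nlinarith [mul_pos hA hB, mul_nonneg (sub_nonneg.mpr hx1) (mul_pos hA hB).le]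
  · rw [hpJ, div_le_iff₀ hdenpos]
    nlinarith [mul_pos hA hB, mul_pos hC hD, hCD_ge, hx0, hx1,
      mul_nonneg (sub_nonneg.mpr hx1) (mul_nonneg hx0.le (mul_pos hA hB).le)]

lemma indicator_sum {n : ℕ} (a b : Fin n → Bool) :
    ∑ τ : Fin n → Bool, ∑ τ' : Fin n → Bool,
      (if τ = a ∧ τ' = b then (1:ℝ) else 0) = 1 := by
  simp [ite_and, Finset.sum_ite_eq']

lemma Qpair_sum {n : ℕ}
    (pacc : Fin n → Fin n → (Fin n → Bool) → (Fin n → Bool) → ℝ)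
    (ℓ k : Fin n) (σ σ' : Fin n → Bool) :
    ∑ τ : Fin n → Bool, ∑ τ' : Fin n → Bool, Qpair pacc ℓ k σ σ' τ τ' = 1 := by
  simp only [Qpair, Finset.sum_add_distrib, ← Finset.mul_sum]
  rw [indicator_sum, indicator_sum]
  ring

lemma Qker_sum {n : ℕ} (hn : 0 < n) (K : Fin n → Fin n → ℝ)
    (hKrow : ∀ ℓ, ∑ k, K ℓ k = 1)
    (pacc : Fin n → Fin n → (Fin n → Bool) → (Fin n → Bool) → ℝ)
    (σ σ' : Fin n → Bool) :
    ∑ τ : Fin n → Bool, ∑ τ' : Fin n → Bool, Qker K pacc σ σ' τ τ' = 1 := by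
  have hswap : ∑ τ : Fin n → Bool, ∑ τ' : Fin n → Bool,
        ∑ ℓ, ∑ k, K ℓ k * Qpair pacc ℓ k σ σ' τ τ'
      = ∑ ℓ, ∑ k, ∑ τ : Fin n → Bool, ∑ τ' : Fin n → Bool,
        K ℓ k * Qpair pacc ℓ k σ σ' τ τ' := by
    calc ∑ τ : Fin n → Bool, ∑ τ' : Fin n → Bool,
          ∑ ℓ, ∑ k, K ℓ k * Qpair pacc ℓ k σ σ' τ τ'
        = ∑ τ : Fin n → Bool, ∑ ℓ, ∑ τ' : Fin n → Bool,
            ∑ k, K ℓ k * Qpair pacc ℓ k σ σ' τ τ' :=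
          Finset.sum_congr rfl fun τ _ => Finset.sum_comm
      _ = ∑ ℓ, ∑ τ : Fin n → Bool, ∑ τ' : Fin n → Bool,
            ∑ k, K ℓ k * Qpair pacc ℓ k σ σ' τ τ' := Finset.sum_comm
      _ = ∑ ℓ, ∑ τ : Fin n → Bool, ∑ k, ∑ τ' : Fin n → Bool,
            K ℓ k * Qpair pacc ℓ k σ σ' τ τ' :=
          Finset.sum_congr rfl fun ℓ _ => Finset.sum_congr rfl fun τ _ =>
            Finset.sum_comm
      _ = ∑ ℓ, ∑ k, ∑ τ : Fin n → Bool, ∑ τ' : Fin n → Bool,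
            K ℓ k * Qpair pacc ℓ k σ σ' τ τ' :=
          Finset.sum_congr rfl fun ℓ _ => Finset.sum_comm
  simp only [Qker, ← Finset.mul_sum]
  rw [hswap]
  have hval : ∑ ℓ, ∑ k, ∑ τ : Fin n → Bool, ∑ τ' : Fin n → Bool,
      K ℓ k * Qpair pacc ℓ k σ σ' τ τ' = (n : ℝ) := by
    calc ∑ ℓ, ∑ k, ∑ τ : Fin n → Bool, ∑ τ' : Fin n → Bool,
          K ℓ k * Qpair pacc ℓ k σ σ' τ τ'
        = ∑ ℓ, ∑ k, K ℓ k := by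
          refine Finset.sum_congr rfl fun ℓ _ => Finset.sum_congr rfl fun k _ => ?_
          simp only [← Finset.mul_sum, Qpair_sum, mul_one]
      _ = (n : ℝ) := by simp [hKrow]
  rw [hval]
  have hne : (n : ℝ) ≠ 0 := Nat.cast_ne_zero.mpr hn.ne'
  field_simp

/-- High-temperature kernel decomposition: pointwise
`p_J(ℓ,k|σ,σ') ≥ e^{-4 J̄} · (1/2)` where `J̄ ≥ max_i ∑_j |J_{ij}|`, and
consequently `Q_J = (1/2) e^{-4 J̄} Q_0 + R` for a nonnegative sub-probability
kernel `R`, where `Q_0` is the collision kernel with `p_0 ≡ 1/2`. -/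
theorem kernel_decomposition_high_temperature {n : ℕ} (hn : 0 < n)
    (J : Matrix (Fin n) (Fin n) ℝ) (hJsymm : J.IsSymm)
    (Jbar : ℝ) (hJbar : ∀ i, ∑ j, |J i j| ≤ Jbar)
    (K : Fin n → Fin n → ℝ) (hKsymm : ∀ ℓ k, K ℓ k = K k ℓ)
    (hK0 : ∀ ℓ k, 0 ≤ K ℓ k) (hKrow : ∀ ℓ, ∑ k, K ℓ k = 1) :
    (∀ ℓ k σ σ', Real.exp (-4 * Jbar) * (1 / 2) ≤ pJ J ℓ k σ σ') ∧
    (∃ R : (Fin n → Bool) → (Fin n → Bool) → (Fin n → Bool) → (Fin n → Bool) → ℝ,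
      (∀ σ σ' τ τ', 0 ≤ R σ σ' τ τ') ∧
      (∀ σ σ', ∑ τ, ∑ τ', R σ σ' τ τ' ≤ 1) ∧
      (∀ σ σ' τ τ', Qker K (pJ J) σ σ' τ τ' =
        (1 / 2) * Real.exp (-4 * Jbar) *
            Qker K (fun _ _ _ _ => (1 / 2 : ℝ)) σ σ' τ τ' +
          R σ σ' τ τ')) := by
  have hx0 : 0 < Real.exp (-4 * Jbar) := Real.exp_pos _
  set c : ℝ := (1 / 2) * Real.exp (-4 * Jbar) with hc
  have hc0 : 0 ≤ c := by positivity
  refine ⟨fun ℓ k σ σ' => (pJ_bounds hn J hJsymm Jbar hJbar ℓ k σ σ').1, ?_⟩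
  have hdiff : ∀ (ℓ k : Fin n) (σ σ' τ τ' : Fin n → Bool),
      c * Qpair (fun _ _ _ _ => (1/2 : ℝ)) ℓ k σ σ' τ τ' ≤ Qpair (pJ J) ℓ k σ σ' τ τ' := by
    intro ℓ k σ σ' τ τ'
    obtain ⟨hlo, hhi⟩ := pJ_bounds hn J hJsymm Jbar hJbar ℓ k σ σ'
    simp only [Qpair, hc]
    set I1 : ℝ := (if τ = Function.update σ ℓ (σ' k) ∧
        τ' = Function.update σ' k (σ ℓ) then (1:ℝ) else 0) with hI1d
    set I2 : ℝ := (if τ = σ ∧ τ' = σ' then (1:ℝ) else 0) with hI2d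
    have hI1 : 0 ≤ I1 := by rw [hI1d]; split <;> norm_num
    have hI2 : 0 ≤ I2 := by rw [hI2d]; split <;> norm_num
    nlinarith [mul_nonneg (show 0 ≤ pJ J ℓ k σ σ' - Real.exp (-4 * Jbar) * (1/4) by
        linarith) hI1,
      mul_nonneg (show 0 ≤ 1 - pJ J ℓ k σ σ' - Real.exp (-4 * Jbar) * (1/4) by
        linarith) hI2]
  refine ⟨fun σ σ' τ τ' => Qker K (pJ J) σ σ' τ τ' -
      c * Qker K (fun _ _ _ _ => (1/2 : ℝ)) σ σ' τ τ', ?_, ?_, ?_⟩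
  · intro σ σ' τ τ'
    rw [sub_nonneg]
    have hstep : c * Qker K (fun _ _ _ _ => (1/2 : ℝ)) σ σ' τ τ'
        = (1 / n) * ∑ ℓ, ∑ k, c * (K ℓ k * Qpair (fun _ _ _ _ => (1/2:ℝ)) ℓ k σ σ' τ τ') := by
      simp only [Qker, Finset.mul_sum]
      exact Finset.sum_congr rfl fun ℓ _ => Finset.sum_congr rfl fun k _ => by ring
    rw [hstep]
    simp only [Qker]
    refine mul_le_mul_of_nonneg_left ?_ (by positivity)
    refine Finset.sum_le_sum fun ℓ _ => Finset.sum_le_sum fun k _ => ?_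
    calc c * (K ℓ k * Qpair (fun _ _ _ _ => (1/2:ℝ)) ℓ k σ σ' τ τ')
        = K ℓ k * (c * Qpair (fun _ _ _ _ => (1/2:ℝ)) ℓ k σ σ' τ τ') := by ring
      _ ≤ K ℓ k * Qpair (pJ J) ℓ k σ σ' τ τ' :=
          mul_le_mul_of_nonneg_left (hdiff ℓ k σ σ' τ τ') (hK0 ℓ k)
  · intro σ σ'
    have h1 := Qker_sum hn K hKrow (pJ J) σ σ'
    have h0 := Qker_sum hn K hKrow (fun _ _ _ _ => (1/2 : ℝ)) σ σ'
    have hval : ∑ τ : Fin n → Bool, ∑ τ' : Fin n → Bool,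
        (Qker K (pJ J) σ σ' τ τ' - c * Qker K (fun _ _ _ _ => (1/2:ℝ)) σ σ' τ τ')
        = 1 - c * 1 := by
      simp only [Finset.sum_sub_distrib, ← Finset.mul_sum]
      rw [h1, h0]
    rw [hval]
    linarith
  · intro σ σ' τ τ'
    ring
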